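/- Let n ≥ 1 and 1 ≤ k ≤ n, and let g be a permutation of the positive integers with g(m) = m for all m > n. If ς_k(g)(m) = m for all m > n, then g(n) = n. (That is, the cloning system on the symmetric groups is properly graded: if ς_k carries g into the image of S_n inside S_{n+1}, then g already lies in the image of S_{n−1} inside S_n.) -/
import Mathlib


/-- The `k`-th cloning map on maps of the positive integers:
`ς_k(g)(m) = g(m)` if `m ≤ k` and `g(m) ≤ g(k)`; `g(m)+1` if `m < k` and `g(m) > g(k)`;
`g(m−1)` if `m > k` and `g(m−1) < g(k)`; `g(m−1)+1` if `m > k` and `g(m−1) ≥ g(k)`. -/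
def clone (k : ℕ+) (g : ℕ+ → ℕ+) : ℕ+ → ℕ+ := fun m =>
  if m ≤ k then (if g m ≤ g k then g m else g m + 1)
  else (if g (m - 1) < g k then g (m - 1) else g (m - 1) + 1)

/-- the cloning system on the symmetric groups is properly graded:
if `g` is a permutation of `ℕ+` fixing all `m > n`, `k ≤ n`, and `ς_k(g)` fixes all
`m > n`, then `g(n) = n`. -/
theorem clone_properly_graded (n k : ℕ+) (hk : k ≤ n)
    (g : ℕ+ → ℕ+) (hg : Function.Bijective g)
    (hfix : ∀ m : ℕ+, n < m → g m = m)
    (hclone : ∀ m : ℕ+, n < m → clone k g m = m) :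
    g n = n := by
  have hgn : g n ≤ n := by
    by_contra h
    push_neg at h
    have := hfix (g n) h
    exact absurd (hg.1 this) h.ne'
  have hlt : n < n + 1 := by
    have : (n : ℕ) < (n + 1 : ℕ+) := by simp
    exact this
  have hc := hclone (n + 1) hlt
  have hnk : ¬ (n + 1 ≤ k) := by
    intro h
    have : (n + 1 : ℕ) ≤ (k : ℕ) := h
    have : (k : ℕ) ≤ n := hk
    omega
  have hsub : (n + 1 : ℕ+) - 1 = n := by
    apply PNat.eq
    simp [PNat.sub_coe, hlt]
  rw [clone, if_neg hnk, hsub] at hc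
  by_cases h : g n < g k
  · rw [if_pos h] at hc
    exfalso
    have : (g n : ℕ) ≤ n := hgn
    have : (g n : ℕ) = (n : ℕ) + 1 := by
      have := congrArg (PNat.val) hc
      simpa using this
    omega
  · rw [if_neg h] at hc
    have : (g n : ℕ) + 1 = (n : ℕ) + 1 := by
      have := congrArg (PNat.val) hc
      simpa using this
    exact PNat.eq (by omega)
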